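/- Let C be a compact convex body in ℝ², centrally symmetric with center p, such that the set V of endpoints of diameter segments of C is finite. Then C can be partitioned into two subsets of strictly smaller diameter (its Borsuk number is 2). -/

import Mathlib

/-!
Central symmetry puts `C` in the closed ball of radius `diam C / 2` about `p`, so a chord of
length `diam C` passes through `p` and has both endpoints, antipodal to each other, on the sphere;
these endpoints lie on `∂C` and hence form a finite set. Pick `u` orthogonal to no `x - p` with
`x` such an endpoint and cut `C` by the line through `p` orthogonal to `u`. A closed half cannot
contain both `x` and `2 • p - x`, so by compactness its diameter is strictly smaller.
-/

open Bornology Metric Set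
open scoped RealInnerProductSpace

theorem IsCompact.exists_dist_eq_diam {X : Type*} [PseudoMetricSpace X] {s : Set X}
    (hs : IsCompact s) (hne : s.Nonempty) : ∃ x ∈ s, ∃ y ∈ s, dist x y = diam s := by
  obtain ⟨⟨x, y⟩, ⟨hx, hy⟩, hmax⟩ :=
    (hs.prod hs).exists_isMaxOn (hne.prod hne) continuous_dist.continuousOn
  refine ⟨x, hx, y, hy, le_antisymm (dist_le_diam_of_mem hs.isBounded hx hy) ?_⟩
  exact diam_le_of_forall_dist_le dist_nonneg fun a ha b hb => hmax (mk_mem_prod ha hb)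

section Normed

variable {E : Type*} [NormedAddCommGroup E] [NormedSpace ℝ E] {C : Set E} {p x y : E}

theorem dist_two_smul_sub (x p : E) : dist x ((2 : ℝ) • p - x) = 2 * dist x p := by
  rw [dist_eq_norm, dist_eq_norm, show x - ((2 : ℝ) • p - x) = (2 : ℝ) • (x - p) by module,
    norm_smul, Real.norm_two]

theorem dist_le_half_diam_of_symmetric (hC : IsBounded C) (hsym : ∀ x ∈ C, (2 : ℝ) • p - x ∈ C)
    (hx : x ∈ C) : dist x p ≤ diam C / 2 := by
  have := dist_le_diam_of_mem hC hx (hsym x hx)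
  rw [dist_two_smul_sub] at this
  linarith

theorem mem_frontier_of_subset_closedBall [Nontrivial E] {r : ℝ} (hCr : C ⊆ closedBall p r)
    (hx : x ∈ C) (hxr : dist x p = r) : x ∈ frontier C := by
  refine ⟨subset_closure hx, fun hint => ?_⟩
  have : x ∈ ball p r := interior_closedBall' p r ▸ interior_mono hCr hint
  exact (mem_ball.1 this).ne hxr

theorem eq_midpoint_of_dist_eq_diam [StrictConvexSpace ℝ E] (hC : IsBounded C)
    (hsym : ∀ x ∈ C, (2 : ℝ) • p - x ∈ C) (hx : x ∈ C) (hy : y ∈ C) (hxy : dist x y = diam C) :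
    p = midpoint ℝ x y := by
  have hxp := dist_le_half_diam_of_symmetric hC hsym hx
  have hyp := dist_le_half_diam_of_symmetric hC hsym hy
  have := dist_triangle_right x y p
  exact eq_midpoint_of_dist_eq_half (by linarith) (by rw [dist_comm]; linarith)

end Normed

section Inner

variable {F : Type*} [NormedAddCommGroup F] [InnerProductSpace ℝ F]

theorem exists_forall_inner_ne_zero {T : Set F} (hT : T.Finite) (h0 : (0 : F) ∉ T) :
    ∃ w : F, ∀ v ∈ T, ⟪v, w⟫ ≠ 0 := by
  classical
  have htop : ⊤ ∉ hT.toFinset.image fun v => (ℝ ∙ v)ᗮ := by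
    simp only [Finset.mem_image, Finite.mem_toFinset, Submodule.orthogonal_eq_top_iff,
      Submodule.span_singleton_eq_bot, not_exists, not_and]
    exact fun v hv hv0 => h0 (hv0 ▸ hv)
  obtain ⟨w, hw⟩ := ne_univ_iff_exists_notMem _ |>.1 (Subspace.biUnion_ne_univ_of_top_notMem htop)
  refine ⟨w, fun v hv hvw => hw (mem_iUnion₂.2 ⟨_, Finset.mem_image_of_mem _ (hT.mem_toFinset.2 hv),
    Submodule.mem_orthogonal_singleton_iff_inner_right.2 hvw⟩)⟩

theorem diam_sep_inner_nonneg_lt {C : Set F} {p w : F} (hC : IsCompact C) (hne : C.Nonempty)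
    (hsym : ∀ x ∈ C, (2 : ℝ) • p - x ∈ C)
    (hw : ∀ x ∈ C, dist x p = diam C / 2 → ⟪x - p, w⟫ ≠ 0) :
    diam {x ∈ C | 0 ≤ ⟪x - p, w⟫} < diam C := by
  set D := {x ∈ C | 0 ≤ ⟪x - p, w⟫}
  have hreflect : ∀ x, (2 : ℝ) • p - x - p = -(x - p) := fun x => by module
  have hDne : D.Nonempty := by
    obtain ⟨z, hz⟩ := hne
    rcases le_total 0 ⟪z - p, w⟫ with h | h
    · exact ⟨z, hz, h⟩
    · exact ⟨_, hsym z hz, by rwa [hreflect, inner_neg_left, neg_nonneg]⟩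
  have hD : IsCompact D :=
    hC.inter_right (isClosed_le (g := fun x => ⟪x - p, w⟫) continuous_const (by fun_prop))
  obtain ⟨x, hx, y, hy, hxy⟩ := hD.exists_dist_eq_diam hDne
  refine (diam_mono (sep_subset _ _) hC.isBounded).lt_of_ne fun hDC => ?_
  have hmid := eq_midpoint_of_dist_eq_diam hC.isBounded hsym hx.1 hy.1 (hxy.trans hDC)
  have hxp : dist x p = diam C / 2 := by
    rw [hmid, dist_left_midpoint, hxy, hDC]; norm_num; ring
  have hyx : y - p = -(x - p) := by
    rw [hmid, midpoint_eq_smul_add]; simp only [invOf_eq_inv]; module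
  have hy' := hy.2
  rw [hyx, inner_neg_left, neg_nonneg] at hy'
  exact hw x hx.1 hxp (le_antisymm hy' hx.2)

end Inner

theorem finite_diameter_endpoints_implies_partition_general
    (C : Set (EuclideanSpace ℝ (Fin 2))) (p : EuclideanSpace ℝ (Fin 2))
    (hC : IsCompact C) (hint : (interior C).Nonempty)
    (hsym : ∀ x ∈ C, (2 : ℝ) • p - x ∈ C)
    (hfin : {x ∈ frontier C | ∃ y ∈ C, dist x y = Metric.diam C}.Finite) :
    ∃ C₁ C₂ : Set (EuclideanSpace ℝ (Fin 2)), C = C₁ ∪ C₂ ∧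
      Metric.diam C₁ < Metric.diam C ∧ Metric.diam C₂ < Metric.diam C := by
  obtain ⟨z, hz⟩ := hint
  have hdiam : 0 < diam C :=
    diam_pos (infinite_of_mem_nhds z (mem_interior_iff_mem_nhds.1 hz)).nontrivial hC.isBounded
  set S := {x ∈ C | dist x p = diam C / 2}
  have hSV : S ⊆ {x ∈ frontier C | ∃ y ∈ C, dist x y = diam C} := fun x hx =>
    ⟨mem_frontier_of_subset_closedBall (fun y hy => mem_closedBall.2
      (dist_le_half_diam_of_symmetric hC.isBounded hsym hy)) hx.1 hx.2,
      _, hsym x hx.1, by rw [dist_two_smul_sub, hx.2]; ring⟩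
  obtain ⟨u, hu⟩ := exists_forall_inner_ne_zero ((hfin.subset hSV).image (· - p)) <| by
    rintro ⟨x, ⟨-, hxp⟩, hx0⟩
    rw [sub_eq_zero.1 hx0, dist_self] at hxp
    linarith
  have hsplit (w : EuclideanSpace ℝ (Fin 2)) (hw : ∀ x ∈ S, ⟪x - p, w⟫ ≠ 0) :=
    diam_sep_inner_nonneg_lt hC ⟨z, interior_subset hz⟩ hsym fun x hx hxp => hw x ⟨hx, hxp⟩
  refine ⟨{x ∈ C | 0 ≤ ⟪x - p, u⟫}, {x ∈ C | 0 ≤ ⟪x - p, -u⟫}, ?_,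
    hsplit u fun x hx => hu _ (mem_image_of_mem _ hx),
    hsplit (-u) fun x hx => by
      rw [inner_neg_right, neg_ne_zero]; exact hu _ (mem_image_of_mem _ hx)⟩
  ext x
  simp only [mem_union, mem_sep_iff, inner_neg_right, neg_nonneg, ← and_or_left]
  exact (and_iff_left (le_total _ _)).symm

theorem finite_diameter_endpoints_implies_partition
    (C : Set (EuclideanSpace ℝ (Fin 2))) (p : EuclideanSpace ℝ (Fin 2))
    (hC : IsCompact C) (hconv : Convex ℝ C) (hint : (interior C).Nonempty)
    (hsym : ∀ x ∈ C, (2 : ℝ) • p - x ∈ C)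
    (hfin : {x ∈ frontier C | ∃ y ∈ C, dist x y = Metric.diam C}.Finite) :
    ∃ C₁ C₂ : Set (EuclideanSpace ℝ (Fin 2)), C = C₁ ∪ C₂ ∧
      Metric.diam C₁ < Metric.diam C ∧ Metric.diam C₂ < Metric.diam C :=
  finite_diameter_endpoints_implies_partition_general C p hC hint hsym hfin
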